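/- arXiv:2311.06173 — 2 statements merged into one kernel-verified Lean document; each statement's English description precedes it below -/
import Mathlib

section
/- Every geometrically irreducible finite-dimensional algebra A over an algebraically closed field is weakly triangular, i.e., the Gabriel quiver of A contains no oriented cycle of positive degree. -/
/-!
Formalization of a statement from:
"Algebras with irreducible module varieties: two-vertex case completed"
-/

universe u v

open Quiver

noncomputable section

/-- The Zariski topology on the affine coordinate space `ι → k`: it is generated by the
basic open sets `{x | p(x) ≠ 0}` for multivariate polynomials `p`. -/
def zariskiTop (k : Type u) [CommSemiring k] (ι : Type v) : TopologicalSpace (ι → k) :=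
  TopologicalSpace.generateFrom
    {U | ∃ p : MvPolynomial ι k, U = {x | MvPolynomial.eval x p ≠ 0}}

/-- The Zariski topology on the module variety `mod_A(n)` consisting of the `k`-algebra
homomorphisms `A → M_{n×n}(k)`: the topology induced from the Zariski topology of the
affine space via the coordinates `f ↦ (f a)_{i,j}`. -/
def modVarTop (k : Type u) [Field k] (A : Type v) [Ring A] [Algebra k A] (n : ℕ) :
    TopologicalSpace (A →ₐ[k] Matrix (Fin n) (Fin n) k) :=
  (zariskiTop k (A × Fin n × Fin n)).induced fun f x => f x.1 x.2.1 x.2.2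

/-- A `k`-algebra `A` is geometrically irreducible if, for every `n ∈ ℕ`, every connected
component of the module variety `mod_A(n)` is irreducible. -/
def GeometricallyIrreducible (k : Type u) [Field k] (A : Type v) [Ring A] [Algebra k A] :
    Prop :=
  ∀ (n : ℕ) (f : A →ₐ[k] Matrix (Fin n) (Fin n) k),
    @IsIrreducible _ (modVarTop k A n) (@connectedComponent _ (modVarTop k A n) f)

section QuiverRep

variable (k : Type u) [Field k] (V : Type) [Quiver.{0} V]

/-- The space of representations of the quiver `V` with dimension vector `d`:
a matrix of size `d b × d a` for every arrow `a ⟶ b`. -/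
def RepM (d : V → ℕ) : Type u :=
  ∀ a b : V, (a ⟶ b) → Matrix (Fin (d b)) (Fin (d a)) k

variable {k V}

/-- Evaluation of a representation on a path: the product of the matrices attached to
the arrows of the path. -/
def evalPath {d : V → ℕ} (M : RepM k V d) :
    ∀ {a b : V}, Path a b → Matrix (Fin (d b)) (Fin (d a)) k
  | _, _, Path.nil => 1
  | _, _, Path.cons p α => M _ _ α * evalPath M p

variable (k V)

/-- A relation of the quiver `V` from `a` to `b`: a `k`-linear combination of paths from
`a` to `b`, all of length at least `2`. -/
structure RelData (a b : V) : Type u where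
  coeff : Path a b →₀ k
  len : ∀ p ∈ coeff.support, 2 ≤ p.length

/-- The type of relations of the quiver `V` (with arbitrary endpoints: the first
component is the starting vertex, the second one the terminating vertex). -/
def Rels : Type u := (a : V) × (b : V) × RelData k V a b

variable {k V}

/-- Evaluation of a relation on a representation. -/
def relEval {d : V → ℕ} (M : RepM k V d) {a b : V} (r : RelData k V a b) :
    Matrix (Fin (d b)) (Fin (d a)) k :=
  r.coeff.sum fun p c => c • evalPath M p

/-- The degree of a path: the number of its arrows which are not loops. -/
def pathDeg [DecidableEq V] : ∀ {a b : V}, Path a b → ℕ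
  | _, _, Path.nil => 0
  | _, c, Path.cons (b := b) p _ => pathDeg p + (if b = c then 0 else 1)

/-- The degree of a relation: the minimum of the degrees of the paths occurring in it. -/
def relDeg [DecidableEq V] {a b : V} (r : RelData k V a b) : ℕ :=
  sInf (pathDeg '' (r.coeff.support : Set (Path a b)))

variable (k V)

/-- The representation variety `rep(d)` of the bound quiver `(V, R)`: the representations
annihilating all the relations in `R`. -/
def repSet (R : Set (Rels k V)) (d : V → ℕ) : Set (RepM k V d) :=
  {M | ∀ r ∈ R, relEval M r.2.2 = 0}

/-- The index type for the affine coordinates on the space of representations. -/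
def RepIdx (d : V → ℕ) : Type :=
  (a : V) × (b : V) × ((a ⟶ b) × (Fin (d b) × Fin (d a)))

variable {k V}

/-- The affine coordinates on the space of representations. -/
def repCoords {d : V → ℕ} (M : RepM k V d) : RepIdx V d → k :=
  fun x => M x.1 x.2.1 x.2.2.1 x.2.2.2.1 x.2.2.2.2

variable (k V)

/-- The Zariski topology on the space of representations. -/
def repTop (d : V → ℕ) : TopologicalSpace (RepM k V d) :=
  (zariskiTop k _).induced repCoords

end QuiverRep

section PathAlgebra

variable (k : Type u) [Field k] (V : Type) [Quiver.{0} V]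

/-- Generators of the path algebra of the quiver `V`: one generator for every vertex (its
trivial path) and one for every arrow. -/
inductive PGen : Type
  | vert (a : V)
  | arr {a b : V} (α : a ⟶ b)

open FreeAlgebra in
/-- The defining relations of the path algebra of a quiver: the trivial paths form a
complete set of orthogonal idempotents summing to `1`, and the trivial paths act as
identities on the adjacent arrows. -/
inductive PARel : FreeAlgebra k (PGen V) → FreeAlgebra k (PGen V) → Prop
  | idem (a : V) : PARel (ι k (PGen.vert a) * ι k (PGen.vert a)) (ι k (PGen.vert a))
  | orth (a b : V) (h : a ≠ b) : PARel (ι k (PGen.vert a) * ι k (PGen.vert b)) 0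
  | vsum : PARel (∑ᶠ a : V, ι k (PGen.vert a)) 1
  | arrL {a b : V} (α : a ⟶ b) :
      PARel (ι k (PGen.vert b) * ι k (PGen.arr α)) (ι k (PGen.arr α))
  | arrR {a b : V} (α : a ⟶ b) :
      PARel (ι k (PGen.arr α) * ι k (PGen.vert a)) (ι k (PGen.arr α))

/-- The path algebra of the quiver `V` over `k`. -/
abbrev PathAlg : Type u := RingQuot (PARel k V)

/-- The canonical projection from the free algebra onto the path algebra. -/
def paMk : FreeAlgebra k (PGen V) →ₐ[k] PathAlg k V :=
  RingQuot.mkAlgHom k (PARel k V)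

/-- The element of the path algebra determined by a path of the quiver. -/
def pathElem : ∀ {a b : V}, Path a b → PathAlg k V
  | a, _, Path.nil => paMk k V (FreeAlgebra.ι k (PGen.vert a))
  | _, _, Path.cons p α => paMk k V (FreeAlgebra.ι k (PGen.arr α)) * pathElem p

/-- The element of the path algebra determined by a relation. -/
def relElem {a b : V} (r : RelData k V a b) : PathAlg k V :=
  r.coeff.sum fun p c => c • pathElem k V p

/-- The algebra of the bound quiver `(V, R)`: the quotient of the path algebra of `V` by
the two-sided ideal generated by the relations in `R`. -/
abbrev BoundAlg (R : Set (Rels k V)) : Type u :=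
  RingQuot (fun x y : PathAlg k V => (∃ r ∈ R, x = relElem k V r.2.2) ∧ y = 0)

/-- The canonical projection from the path algebra onto the algebra of a bound quiver. -/
def baMk (R : Set (Rels k V)) : PathAlg k V →ₐ[k] BoundAlg k V R :=
  RingQuot.mkAlgHom k _

/-- The pair `(V, R)` is a bound quiver: all sufficiently long paths lie in the ideal
generated by the relations, i.e. their images vanish in `BoundAlg k V R`.  (Together
with the finiteness of the quiver this makes `BoundAlg k V R` finite-dimensional.) -/
def IsBoundQuiver (R : Set (Rels k V)) : Prop :=
  ∃ N : ℕ, ∀ (a b : V) (p : Path a b), N ≤ p.length → baMk k V R (pathElem k V p) = 0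

/-- `R` is a minimal set of relations: no relation of `R` lies in the two-sided ideal
generated by the remaining ones. -/
def MinimalRels (R : Set (Rels k V)) : Prop :=
  ∀ r ∈ R, baMk k V (R \ {r}) (relElem k V r.2.2) ≠ 0

end PathAlgebra

/-!
If the quiver has an oriented cycle of positive degree, it has a cycle
`w 0 → w 1 → ⋯ → w (m-1) → w 0` through `m ≥ 2` distinct vertices. For each arrow `αᵢ` of
this cycle there is a line `s ↦ ρᵢ(s)` in `mod_A(m)`: the vertex `w j` acts by the coordinate
projection onto `j`, and `αᵢ` alone acts, by `s • E_{i+1,i}`. All paths of length `≥ 2` act by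
zero, so the relations hold. The lines all pass through the semisimple representation
`ρᵢ(0)`, so they lie in one connected component. That component is irreducible, so it contains
a representation `f` on which every `αᵢ` acts nonzero. In dimension `m` the `m` orthogonal
idempotents `f (e_{w j})` have rank one. So each `f αᵢ` is an isomorphism between consecutive
lines, and `f` does not vanish on arbitrarily long paths around the cycle. This contradicts
the vanishing of long paths in `A`.
-/

open Topology Fin.NatCast

namespace PathAlg

variable {k : Type u} [Field k] {V : Type} [Quiver.{0} V] [Fintype V]
  {B : Type*} [Semiring B] [Algebra k B] {e : V → B} {a : ∀ {x y : V}, (x ⟶ y) → B}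

variable (e a) in
def genLift : PGen V → B
  | .vert v => e v
  | .arr β => a β

def lift (he : CompleteOrthogonalIdempotents e)
    (hl : ∀ {x y : V} (β : x ⟶ y), e y * a β = a β)
    (hr : ∀ {x y : V} (β : x ⟶ y), a β * e x = a β) : PathAlg k V →ₐ[k] B :=
  RingQuot.liftAlgHom k ⟨FreeAlgebra.lift k (genLift e a), fun x y h => by
    cases h with
    | idem v => simpa [genLift] using (he.idem v).eq
    | orth v v' hvv' => simpa [genLift] using he.ortho hvv'
    | vsum => simpa [finsum_eq_sum_of_fintype, genLift] using he.complete
    | arrL β => simpa [genLift] using hl β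
    | arrR β => simpa [genLift] using hr β⟩

variable (he : CompleteOrthogonalIdempotents e)
  (hl : ∀ {x y : V} (β : x ⟶ y), e y * a β = a β)
  (hr : ∀ {x y : V} (β : x ⟶ y), a β * e x = a β)

@[simp]
lemma lift_vert (v : V) : lift he hl hr (paMk k V (FreeAlgebra.ι k (.vert v))) = e v := by
  simp [lift, paMk, genLift]

@[simp]
lemma lift_arr {x y : V} (β : x ⟶ y) :
    lift he hl hr (paMk k V (FreeAlgebra.ι k (.arr β))) = a β := by
  simp [lift, paMk, genLift]

lemma lift_pathElem_cons {x y z : V} (p : Path x y) (β : y ⟶ z) :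
    lift he hl hr (pathElem k V (p.cons β)) = a β * lift he hl hr (pathElem k V p) := by
  rw [pathElem, map_mul, lift_arr]

lemma lift_pathElem_eq_zero (ha : ∀ {x y x' y' : V} (β : x ⟶ y) (γ : x' ⟶ y'), a β * a γ = 0)
    {x y : V} (p : Path x y) (hp : 2 ≤ p.length) : lift he hl hr (pathElem k V p) = 0 := by
  match p, hp with
  | .cons (.cons q γ) β, _ =>
    rw [lift_pathElem_cons, lift_pathElem_cons, ← mul_assoc, ha, zero_mul]

lemma lift_relElem_eq_zero (ha : ∀ {x y x' y' : V} (β : x ⟶ y) (γ : x' ⟶ y'), a β * a γ = 0)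
    {x y : V} (r : RelData k V x y) : lift he hl hr (relElem k V r) = 0 := by
  rw [relElem, Finsupp.sum, map_sum]
  exact Finset.sum_eq_zero fun p hp => by
    rw [map_smul, lift_pathElem_eq_zero he hl hr ha p (r.len p hp), smul_zero]

end PathAlg

lemma paMk_rel {k : Type u} [Field k] {V : Type} [Quiver.{0} V] {x y : FreeAlgebra k (PGen V)}
    (h : PARel k V x y) : paMk k V x = paMk k V y :=
  RingQuot.mkAlgHom_rel k h

namespace BoundAlg

variable {k : Type u} [Field k] {V : Type} [Quiver.{0} V] (R : Set (Rels k V))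

def vertex (v : V) : BoundAlg k V R := baMk k V R (paMk k V (FreeAlgebra.ι k (.vert v)))

def arrow {x y : V} (β : x ⟶ y) : BoundAlg k V R :=
  baMk k V R (paMk k V (FreeAlgebra.ι k (.arr β)))

lemma baMk_pathElem_cons {x y z : V} (p : Path x y) (β : y ⟶ z) :
    baMk k V R (pathElem k V (p.cons β)) = arrow R β * baMk k V R (pathElem k V p) := by
  rw [pathElem, map_mul, arrow]

lemma arrow_homOfEq {x y x' y' : V} (β : x ⟶ y) (hx : x = x') (hy : y = y') :
    arrow R (Quiver.homOfEq β hx hy) = arrow R β := by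
  subst hx hy
  rfl

lemma orthogonalIdempotents_vertex : OrthogonalIdempotents (vertex R) where
  idem v := by
    rw [IsIdempotentElem, vertex, ← map_mul, ← map_mul, paMk_rel (PARel.idem v)]
  ortho v v' h := by
    dsimp only
    rw [vertex, vertex, ← map_mul, ← map_mul, paMk_rel (PARel.orth v v' h), map_zero, map_zero]

lemma vertex_mul_arrow {x y : V} (β : x ⟶ y) : vertex R y * arrow R β = arrow R β := by
  rw [vertex, arrow, ← map_mul, ← map_mul, paMk_rel (PARel.arrL β)]

lemma arrow_mul_vertex {x y : V} (β : x ⟶ y) : arrow R β * vertex R x = arrow R β := by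
  rw [vertex, arrow, ← map_mul, ← map_mul, paMk_rel (PARel.arrR β)]

variable {B : Type*} [Semiring B] [Algebra k B]

def lift (φ : PathAlg k V →ₐ[k] B) (hφ : ∀ r ∈ R, φ (relElem k V r.2.2) = 0) :
    BoundAlg k V R →ₐ[k] B :=
  RingQuot.liftAlgHom k ⟨φ, by rintro _ _ ⟨⟨r, hr, rfl⟩, rfl⟩; rw [hφ r hr, map_zero]⟩

@[simp]
lemma lift_baMk (φ : PathAlg k V →ₐ[k] B) (hφ : ∀ r ∈ R, φ (relElem k V r.2.2) = 0)
    (x : PathAlg k V) : lift R φ hφ (baMk k V R x) = φ x :=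
  RingQuot.liftAlgHom_mkAlgHom_apply _ _ _ _

lemma hom_ext {f g : BoundAlg k V R →ₐ[k] B} (hv : ∀ v, f (vertex R v) = g (vertex R v))
    (ha : ∀ {x y : V} (β : x ⟶ y), f (arrow R β) = g (arrow R β)) : f = g := by
  refine RingQuot.ringQuot_ext' _ _ _ <| RingQuot.ringQuot_ext' _ _ _ <| FreeAlgebra.hom_ext ?_
  funext x
  cases x with
  | vert v => exact hv v
  | arr β => exact ha β

end BoundAlg

section VertexProj

variable {V : Type} [DecidableEq V] {m : ℕ} (w : Fin m → V) {S : Type*} [CommSemiring S]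

def vertexProj (v : V) : Matrix (Fin m) (Fin m) S :=
  Matrix.diagonal fun l => if w l = v then 1 else 0

lemma completeOrthogonalIdempotents_vertexProj [Fintype V] :
    CompleteOrthogonalIdempotents (vertexProj w (S := S)) where
  idem v := by
    rw [IsIdempotentElem, vertexProj, Matrix.diagonal_mul_diagonal]
    congr 1
    funext l
    split_ifs <;> simp
  ortho v v' h := by
    dsimp only
    rw [vertexProj, vertexProj, Matrix.diagonal_mul_diagonal, ← Matrix.diagonal_zero]
    congr 1
    funext l
    split_ifs with h₁ h₂ <;> simp_all
  complete := by
    ext a b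
    by_cases hab : a = b <;> simp [vertexProj, Matrix.sum_apply, Matrix.one_apply, hab]

lemma vertexProj_mul_single (i j : Fin m) (s : S) :
    vertexProj w (w i) * Matrix.single i j s = Matrix.single i j s := by
  ext a b
  by_cases h : a = i <;> simp_all [vertexProj, Matrix.diagonal_mul, Matrix.single_apply]

lemma single_mul_vertexProj (i j : Fin m) (s : S) :
    Matrix.single i j s * vertexProj w (w j) = Matrix.single i j s := by
  ext a b
  by_cases h : b = j <;> simp_all [vertexProj, Matrix.mul_diagonal, Matrix.single_apply, eq_comm]

end VertexProj

section SingleArrowRep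

open Polynomial

variable {k : Type u} [Field k] {V : Type} [Quiver.{0} V] (R : Set (Rels k V)) {m : ℕ}
  {w : Fin m → V} {S : Type*} [CommSemiring S] [Algebra k S] {i j : Fin m} (α : w i ⟶ w j)

open Classical in
def singleArrowMatrix (s : S) {x y : V} (β : x ⟶ y) : Matrix (Fin m) (Fin m) S :=
  if Total.mk x y β = Total.mk _ _ α then Matrix.single j i s else 0

lemma singleArrowMatrix_mul_singleArrowMatrix (hij : i ≠ j) (s : S) {x y x' y' : V}
    (β : x ⟶ y) (γ : x' ⟶ y') : singleArrowMatrix α s β * singleArrowMatrix α s γ = 0 := by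
  unfold singleArrowMatrix
  split_ifs <;> simp [hij]

lemma mapMatrix_aeval_zero_singleArrowMatrix {x y : V} (β : x ⟶ y) :
    (aeval (0 : k)).mapMatrix (singleArrowMatrix α (X : k[X]) β) = 0 := by
  unfold singleArrowMatrix
  split_ifs <;> simp only [AlgHom.mapMatrix_apply, Matrix.map_single, aeval_X, Matrix.single_zero,
    map_zero]

variable [DecidableEq V]

lemma vertexProj_mul_singleArrowMatrix (s : S) {x y : V} (β : x ⟶ y) :
    vertexProj w y * singleArrowMatrix α s β = singleArrowMatrix α s β := by
  unfold singleArrowMatrix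
  split_ifs with h
  · rw [show y = w j from congrArg Total.right h, vertexProj_mul_single]
  · rw [mul_zero]

lemma singleArrowMatrix_mul_vertexProj (s : S) {x y : V} (β : x ⟶ y) :
    singleArrowMatrix α s β * vertexProj w x = singleArrowMatrix α s β := by
  unfold singleArrowMatrix
  split_ifs with h
  · rw [show x = w i from congrArg Total.left h, single_mul_vertexProj]
  · rw [zero_mul]

variable [Fintype V] (hij : i ≠ j)

def singleArrowRep (s : S) : BoundAlg k V R →ₐ[k] Matrix (Fin m) (Fin m) S :=
  BoundAlg.lift R
    (PathAlg.lift (completeOrthogonalIdempotents_vertexProj w)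
      (vertexProj_mul_singleArrowMatrix α s) (singleArrowMatrix_mul_vertexProj α s))
    fun r _ => PathAlg.lift_relElem_eq_zero _ _ _
      (singleArrowMatrix_mul_singleArrowMatrix α hij s) r.2.2

@[simp]
lemma singleArrowRep_vertex (s : S) (v : V) :
    singleArrowRep R α hij s (BoundAlg.vertex R v) = vertexProj w v := by
  simp [singleArrowRep, BoundAlg.vertex]

@[simp]
lemma singleArrowRep_arrow (s : S) {x y : V} (β : x ⟶ y) :
    singleArrowRep R α hij s (BoundAlg.arrow R β) = singleArrowMatrix α s β := by
  simp [singleArrowRep, BoundAlg.arrow]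

def singleArrowCurve (s : k) : BoundAlg k V R →ₐ[k] Matrix (Fin m) (Fin m) k :=
  (aeval s).mapMatrix.comp (singleArrowRep R α hij (X : k[X]))

lemma singleArrowCurve_apply (s : k) (a : BoundAlg k V R) (l l' : Fin m) :
    singleArrowCurve R α hij s a l l' = (singleArrowRep R α hij X a l l').eval s := by
  simp [singleArrowCurve, coe_aeval_eq_eval]

lemma singleArrowCurve_arrow_self (s : k) :
    singleArrowCurve R α hij s (BoundAlg.arrow R α) = Matrix.single j i s := by
  simp only [singleArrowCurve, AlgHom.comp_apply, singleArrowRep_arrow, singleArrowMatrix,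
    if_true, AlgHom.mapMatrix_apply, Matrix.map_single, aeval_X]

lemma singleArrowCurve_zero {i' j' : Fin m} (α' : w i' ⟶ w j') (hij' : i' ≠ j') :
    singleArrowCurve R α hij 0 = singleArrowCurve R α' hij' 0 := by
  apply BoundAlg.hom_ext
  · simp [singleArrowCurve]
  · intro x y β
    simp only [singleArrowCurve, AlgHom.comp_apply, singleArrowRep_arrow,
      mapMatrix_aeval_zero_singleArrowMatrix]

end SingleArrowRep

section Zariski

variable {k : Type u} [Field k]

lemma isOpen_zariskiTop_setOf_eval_ne_zero {ι : Type*} (p : MvPolynomial ι k) :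
    IsOpen[zariskiTop k ι] {x | MvPolynomial.eval x p ≠ 0} :=
  TopologicalSpace.isOpen_generateFrom_of_mem ⟨p, rfl⟩

lemma CofiniteTopology.isOpen_setOf_eval_ne_zero (q : Polynomial k) :
    IsOpen {s : CofiniteTopology k | q.eval (CofiniteTopology.of.symm s) ≠ 0} := by
  refine CofiniteTopology.isOpen_iff.2 fun ⟨s, hs⟩ => ?_
  have hq : q ≠ 0 := by rintro rfl; exact hs Polynomial.eval_zero
  simp only [Set.compl_ofPred, not_not]
  exact (Polynomial.finite_setOfPred_isRoot hq).preimage CofiniteTopology.of.symm.injective.injOn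

lemma MvPolynomial.eval_eval_eq_eval_aeval {ι : Type*} (q : ι → Polynomial k)
    (p : MvPolynomial ι k) (s : k) :
    MvPolynomial.eval (fun i => (q i).eval s) p = (MvPolynomial.aeval q p).eval s := by
  rw [← Polynomial.coe_aeval_eq_eval, ← AlgHom.comp_apply, MvPolynomial.comp_aeval]
  rfl

lemma continuous_cofiniteTopology_zariskiTop {ι : Type*} {g : k → ι → k}
    (hg : ∀ i, ∃ q : Polynomial k, ∀ s, g s i = q.eval s) :
    Continuous[_, zariskiTop k ι] (g ∘ CofiniteTopology.of.symm) := by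
  choose q hq using hg
  refine continuous_generateFrom_iff.2 ?_
  rintro _ ⟨p, rfl⟩
  have hgq : g = fun s i => (q i).eval s := funext fun s => funext fun i => hq i s
  simp only [Set.preimage_ofPred_eq, Function.comp_apply, hgq,
    MvPolynomial.eval_eval_eq_eval_aeval]
  exact CofiniteTopology.isOpen_setOf_eval_ne_zero _

variable {A : Type*} [Ring A] [Algebra k A] {n : ℕ}

lemma isOpen_modVarTop_setOf_apply_ne_zero (a : A) :
    IsOpen[modVarTop k A n] {f : A →ₐ[k] Matrix (Fin n) (Fin n) k | f a ≠ 0} := by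
  let := modVarTop k A n
  let := zariskiTop k (A × Fin n × Fin n)
  have hcoord : Continuous
      fun (f : A →ₐ[k] Matrix (Fin n) (Fin n) k) (x : A × Fin n × Fin n) => f x.1 x.2.1 x.2.2 :=
    continuous_induced_dom
  have hset : {f : A →ₐ[k] Matrix (Fin n) (Fin n) k | f a ≠ 0}
      = ⋃ l : Fin n × Fin n, (fun f (x : A × Fin n × Fin n) => f x.1 x.2.1 x.2.2) ⁻¹'
          {c | MvPolynomial.eval c (MvPolynomial.X (a, l)) ≠ 0} := by
    ext f
    simp [← Matrix.ext_iff]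
  rw [hset]
  exact isOpen_iUnion fun l => hcoord.isOpen_preimage _ (isOpen_zariskiTop_setOf_eval_ne_zero _)

lemma continuous_cofiniteTopology_modVarTop {γ : k → A →ₐ[k] Matrix (Fin n) (Fin n) k}
    (hγ : ∀ a l l', ∃ q : Polynomial k, ∀ s, γ s a l l' = q.eval s) :
    Continuous[_, modVarTop k A n] (γ ∘ CofiniteTopology.of.symm) :=
  continuous_induced_rng.2 <| continuous_cofiniteTopology_zariskiTop
    (g := fun s (x : A × Fin n × Fin n) => γ s x.1 x.2.1 x.2.2) fun x => hγ x.1 x.2.1 x.2.2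

end Zariski

lemma IsIrreducible.inter_iInter_nonempty {X : Type*} [TopologicalSpace X] {s : Set X}
    (hs : IsIrreducible s) {ι : Type*} [Finite ι] {U : ι → Set X} (hU : ∀ i, IsOpen (U i))
    (hsU : ∀ i, (s ∩ U i).Nonempty) : (s ∩ ⋂ i, U i).Nonempty := by
  classical
  have := Fintype.ofFinite ι
  simpa [Set.sInter_image] using isIrreducible_iff_sInter.1 hs (Finset.univ.image U)
    (by simpa using hU) (by simpa using hsU)

section LinearAlgebra

open Module LinearMap

variable {k : Type*} [Field k] {W : Type*} [AddCommGroup W] [Module k W] [FiniteDimensional k W]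

lemma OrthogonalIdempotents.exists_smul_eq_of_mem_range {ι : Type*} [Fintype ι]
    {P : ι → End k W} (hP : OrthogonalIdempotents P) (hP0 : ∀ i, P i ≠ 0)
    (hcard : finrank k W ≤ Fintype.card ι) {i : ι} {x y : W} (hx : x ∈ range (P i))
    (hx0 : x ≠ 0) (hy : y ∈ range (P i)) : ∃ c : k, c • x = y := by
  classical
  have hfix : ∀ j, ∀ z ∈ range (P j), P j z = z := by
    rintro j _ ⟨z, rfl⟩
    rw [← Module.End.mul_apply, (hP.idem j).eq]
  have hv : ∀ j, ∃ v ∈ range (P j), v ≠ 0 := fun j =>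
    (Submodule.ne_bot_iff _).1 (mt LinearMap.range_eq_bot.1 (hP0 j))
  choose v hvP hv0 using hv
  have hPv : ∀ j j', P j (v j') = if j = j' then v j' else 0 := by
    intro j j'
    split_ifs with h
    · subst h; exact hfix j _ (hvP j)
    · obtain ⟨z, hz⟩ := hvP j'
      rw [← hz, ← Module.End.mul_apply, hP.ortho h, LinearMap.zero_apply]
  have hli : LinearIndependent k v := by
    refine Fintype.linearIndependent_iff.2 fun c hc j => ?_
    have := congrArg (P j) hc
    simp only [map_sum, map_smul, hPv, smul_ite, smul_zero, Finset.sum_ite_eq,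
      Finset.mem_univ, if_true, map_zero] at this
    exact (smul_eq_zero.1 this).resolve_right (hv0 j)
  have hspan : Submodule.span k (Set.range v) = ⊤ :=
    hli.span_eq_top_of_card_eq_finrank' (le_antisymm hli.fintype_card_le_finrank hcard)
  have hcoord : ∀ z ∈ range (P i), ∃ c : k, c • v i = z := by
    intro z hz
    have hz' : z ∈ Submodule.span k (Set.range v) := hspan ▸ Submodule.mem_top
    obtain ⟨c, hc⟩ := (Submodule.mem_span_range_iff_exists_fun k).1 hz'
    refine ⟨c i, ?_⟩
    rw [← hfix i z hz, ← hc]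
    simp [hPv]
  obtain ⟨a, rfl⟩ := hcoord x hx
  obtain ⟨b, rfl⟩ := hcoord y hy
  have ha : a ≠ 0 := by rintro rfl; exact hx0 (zero_smul k _)
  exact ⟨b / a, by rw [smul_smul, div_mul_cancel₀ b ha]⟩

lemma OrthogonalIdempotents.cyclic_product_ne_zero {m : ℕ} [NeZero m] {P M : Fin m → End k W}
    (hP : OrthogonalIdempotents P) (hcard : finrank k W ≤ m) (hM0 : ∀ i, M i ≠ 0)
    (hPM : ∀ i, P (i + 1) * M i = M i) (hMP : ∀ i, M i * P i = M i) {N : ℕ → End k W}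
    (hN0 : N 0 = P 0) (hN : ∀ t : ℕ, N (t + 1) = M (t : Fin m) * N t) (t : ℕ) : N t ≠ 0 := by
  have hP0 : ∀ i, P i ≠ 0 := fun i h => hM0 i (by rw [← hMP i, h, mul_zero])
  have hcard' : finrank k W ≤ Fintype.card (Fin m) := by rwa [Fintype.card_fin]
  -- a nonzero `M i` cannot vanish on the line `range (P i)`, which it maps into `range (P (i+1))`
  have hstep : ∀ i, ∀ x ∈ range (P i), x ≠ 0 → M i x ≠ 0 ∧ M i x ∈ range (P (i + 1)) := by
    intro i x hx hx0
    refine ⟨fun hMx => hM0 i (LinearMap.ext fun y => ?_),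
      ⟨M i x, by rw [← Module.End.mul_apply, hPM]⟩⟩
    obtain ⟨c, hc⟩ :=
      hP.exists_smul_eq_of_mem_range hP0 hcard' hx hx0 (LinearMap.mem_range_self _ y)
    rw [← hMP i, Module.End.mul_apply, ← hc, map_smul, hMx, smul_zero, LinearMap.zero_apply]
  obtain ⟨x, hx, hx0⟩ := (Submodule.ne_bot_iff _).1 (mt LinearMap.range_eq_bot.1 (hP0 0))
  have hfix : P 0 x = x := by
    obtain ⟨z, rfl⟩ := hx
    rw [← Module.End.mul_apply, (hP.idem 0).eq]
  suffices ∀ t : ℕ, N t x ≠ 0 ∧ N t x ∈ range (P (t : Fin m)) from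
    fun h => (this t).1 (by rw [h, LinearMap.zero_apply])
  intro t
  induction t with
  | zero => exact ⟨by rwa [hN0, hfix], by rw [hN0, hfix, Nat.cast_zero]; exact hx⟩
  | succ t ih =>
    rw [hN, Module.End.mul_apply, Nat.cast_succ]
    exact hstep _ _ ih.2 ih.1

end LinearAlgebra

section Cycles

variable {V : Type} [Quiver.{0} V]

namespace Quiver.Path

lemma isChain_vertices {a b : V} (p : Path a b) :
    p.vertices.IsChain fun x y => Nonempty (x ⟶ y) := by
  induction p with
  | nil => exact .singleton _
  | cons p e ih =>
    rw [vertices_cons, List.concat_eq_append]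
    refine ih.append (.singleton _) fun x hx y hy => ?_
    simp only [List.getLast?_eq_some_getLast p.vertices_ne_nil, vertices_getLast, Option.mem_def,
      Option.some.injEq, List.head?_cons] at hx hy
    subst hx hy
    exact ⟨e⟩

lemma exists_length_lt_of_not_nodup_vertices {a b : V} (p : Path a b)
    (hp : ¬p.vertices.Nodup) : ∃ q : Path a b, q.length < p.length := by
  induction p with
  | nil => simp at hp
  | cons p e ih =>
    rw [vertices_cons, List.nodup_concat, not_and_or, not_not] at hp
    rcases hp with hmem | hp
    · obtain ⟨p₁, p₂, rfl⟩ := exists_eq_comp_of_mem_vertices p hmem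
      exact ⟨p₁, by simp [length_comp]⟩
    · obtain ⟨q, hq⟩ := ih hp
      exact ⟨q.cons e, by simpa using hq⟩

lemma exists_nodup_vertices {a b : V} (p : Path a b) : ∃ q : Path a b, q.vertices.Nodup := by
  induction h : p.length using Nat.strong_induction_on generalizing p with
  | _ n ih =>
    by_cases hp : p.vertices.Nodup
    · exact ⟨p, hp⟩
    · obtain ⟨q, hq⟩ := exists_length_lt_of_not_nodup_vertices p hp
      exact ih _ (h ▸ hq) q rfl

end Quiver.Path

lemma exists_injective_cycle_of_nodup_vertices {x y : V} (β : x ⟶ y) (hxy : x ≠ y)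
    (q : Path y x) (hq : q.vertices.Nodup) :
    ∃ (m : ℕ) (w : Fin (m + 2) → V), Function.Injective w ∧ ∀ i, Nonempty (w i ⟶ w (i + 1)) := by
  obtain ⟨m, hm⟩ : ∃ m, q.length = m + 1 :=
    Nat.exists_eq_succ_of_ne_zero fun h => hxy (q.eq_of_length_zero h).symm
  have hlen : q.vertices.length = m + 2 := by simp [hm]
  refine ⟨m, fun i => q.vertices[i.val], fun i j hij => Fin.ext ((hq.getElem_inj_iff).1 hij),
    fun i => ?_⟩
  by_cases hi : i = Fin.last (m + 1)
  · subst hi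
    have hlast : q.vertices[m + 1] = x := by
      simpa [List.getLast_eq_getElem, hlen] using q.vertices_getLast
    simpa [hlast] using ⟨β⟩
  · have hsucc : ((i + 1 : Fin (m + 2)) : ℕ) = i + 1 := by simp [Fin.val_add_one, hi]
    have hi' : i.val + 1 < q.vertices.length := by
      have := Fin.val_lt_last hi
      omega
    simpa only [hsucc] using List.isChain_iff_getElem.1 q.isChain_vertices i hi'

variable [DecidableEq V]

lemma exists_nonloop_of_pathDeg_ne_zero {a b : V} (p : Path a b) (hp : pathDeg p ≠ 0) :
    ∃ (x y : V) (_ : x ⟶ y), x ≠ y ∧ Nonempty (Path a x) ∧ Nonempty (Path y b) := by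
  induction p with
  | nil => simp [pathDeg] at hp
  | @cons b c p e ih =>
    by_cases hbc : b = c
    · subst hbc
      obtain ⟨x, y, β, hxy, hax, ⟨q⟩⟩ := ih (by simpa [pathDeg] using hp)
      exact ⟨x, y, β, hxy, hax, ⟨q.cons e⟩⟩
    · exact ⟨b, c, e, hbc, ⟨p⟩, ⟨.nil⟩⟩

lemma exists_injective_cycle_of_pathDeg_ne_zero {a : V} (p : Path a a) (hp : pathDeg p ≠ 0) :
    ∃ (m : ℕ) (w : Fin (m + 2) → V), Function.Injective w ∧ ∀ i, Nonempty (w i ⟶ w (i + 1)) := by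
  obtain ⟨x, y, β, hxy, ⟨pax⟩, ⟨pya⟩⟩ := exists_nonloop_of_pathDeg_ne_zero p hp
  obtain ⟨q, hq⟩ := (pya.comp pax).exists_nodup_vertices
  exact exists_injective_cycle_of_nodup_vertices β hxy q hq

end Cycles

section CyclePath

variable {V : Type} [Quiver.{0} V] {m : ℕ} [NeZero m] (w : Fin m → V)
  (ar : ∀ i, w i ⟶ w (i + 1))

def cyclePath : (t : ℕ) → Path (w 0) (w t)
  | 0 => .nil
  | t + 1 => (cyclePath t).cons (Quiver.homOfEq (ar t) rfl (by rw [Nat.cast_succ]))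

lemma length_cyclePath (t : ℕ) : (cyclePath w ar t).length = t := by
  induction t with
  | zero => rfl
  | succ t ih => simp [cyclePath, ih]

variable {k : Type u} [Field k] (R : Set (Rels k V))

lemma baMk_pathElem_cyclePath_zero :
    baMk k V R (pathElem k V (cyclePath w ar 0)) = BoundAlg.vertex R (w 0) := by
  rw [cyclePath, pathElem, BoundAlg.vertex]

lemma baMk_pathElem_cyclePath_succ (t : ℕ) :
    baMk k V R (pathElem k V (cyclePath w ar (t + 1)))
      = BoundAlg.arrow R (ar t) * baMk k V R (pathElem k V (cyclePath w ar t)) := by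
  rw [cyclePath, BoundAlg.baMk_pathElem_cons, BoundAlg.arrow_homOfEq]

end CyclePath

section Main

variable {k : Type u} [Field k] {V : Type} [Quiver.{0} V] {R : Set (Rels k V)}

lemma GeometricallyIrreducible.exists_forall_arrow_ne_zero [Infinite k] [Fintype V]
    [DecidableEq V] (hirr : GeometricallyIrreducible k (BoundAlg k V R)) {m : ℕ}
    {w : Fin m → V} {ι : Type*} [Finite ι] [Nonempty ι] {src tgt : ι → Fin m}
    (α : ∀ l, w (src l) ⟶ w (tgt l)) (hα : ∀ l, src l ≠ tgt l) :
    ∃ f : BoundAlg k V R →ₐ[k] Matrix (Fin m) (Fin m) k, ∀ l, f (BoundAlg.arrow R (α l)) ≠ 0 := by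
  let := modVarTop k (BoundAlg k V R) m
  obtain ⟨l₀⟩ := ‹Nonempty ι›
  have hcurve : ∀ l s, singleArrowCurve R (α l) (hα l) s
      ∈ connectedComponent (singleArrowCurve R (α l₀) (hα l₀) 0) := by
    intro l s
    have hcont := continuous_cofiniteTopology_modVarTop (γ := singleArrowCurve R (α l) (hα l))
      fun a i j => ⟨_, fun s => singleArrowCurve_apply R (α l) (hα l) s a i j⟩
    rw [singleArrowCurve_zero R (α l₀) (hα l₀) (α l) (hα l)]
    exact (isPreconnected_range hcont).subset_connectedComponent ⟨CofiniteTopology.of 0, rfl⟩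
      ⟨CofiniteTopology.of s, rfl⟩
  obtain ⟨f, -, hf⟩ := (hirr m _).inter_iInter_nonempty
    (U := fun l => {f | f (BoundAlg.arrow R (α l)) ≠ 0})
    (fun l => isOpen_modVarTop_setOf_apply_ne_zero (BoundAlg.arrow R (α l)))
    fun l => ⟨_, hcurve l 1, by
      simp only [Set.mem_ofPred_eq, singleArrowCurve_arrow_self]
      exact fun h => one_ne_zero (α := k) (by simpa using congrArg (· (tgt l) (src l)) h)⟩
  exact ⟨f, Set.mem_iInter.1 hf⟩

lemma IsBoundQuiver.exists_apply_arrow_eq_zero (hbd : IsBoundQuiver k V R) {m : ℕ} [NeZero m]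
    {w : Fin m → V} (hw : Function.Injective w) (ar : ∀ i, w i ⟶ w (i + 1))
    (f : BoundAlg k V R →ₐ[k] Matrix (Fin m) (Fin m) k) :
    ∃ i, f (BoundAlg.arrow R (ar i)) = 0 := by
  by_contra! hf
  obtain ⟨N, hN⟩ := hbd
  let g := (Matrix.toLinAlgEquiv' : Matrix (Fin m) (Fin m) k ≃ₐ[k] _).toAlgHom.comp f
  refine OrthogonalIdempotents.cyclic_product_ne_zero (P := fun j => g (BoundAlg.vertex R (w j)))
    (M := fun i => g (BoundAlg.arrow R (ar i)))
    (N := fun t => g (baMk k V R (pathElem k V (cyclePath w ar t))))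
    (((BoundAlg.orthogonalIdempotents_vertex R).embedding ⟨w, hw⟩).map g.toRingHom) (by simp)
    (fun i => by simpa [g] using hf i) (fun i => by simp [← map_mul, BoundAlg.vertex_mul_arrow])
    (fun i => by simp [← map_mul, BoundAlg.arrow_mul_vertex])
    (by simp [baMk_pathElem_cyclePath_zero]) (fun t => by simp [baMk_pathElem_cyclePath_succ]) N ?_
  rw [hN _ _ _ (length_cyclePath w ar N).ge, map_zero]

end Main

/-- Every geometrically irreducible finite-dimensional algebra over an
algebraically closed field, presented as the path algebra `kQ/I` of a bound quiver, is
weakly triangular: its Gabriel quiver `Q` contains no oriented cycle of positive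
degree. -/
theorem geometricallyIrreducible_weaklyTriangular (k : Type u) [Field k] [IsAlgClosed k]
    (V : Type) [Quiver.{0} V] [Finite V] [DecidableEq V] [∀ a b : V, Finite (a ⟶ b)]
    (R : Set (Rels k V)) (hbd : IsBoundQuiver k V R)
    (hirr : GeometricallyIrreducible k (BoundAlg k V R)) :
    ∀ (a : V) (p : Path a a), pathDeg p = 0 := by
  intro a p
  by_contra hp
  have := Fintype.ofFinite V
  obtain ⟨m, w, hw, har⟩ := exists_injective_cycle_of_pathDeg_ne_zero p hp
  let ar i : w i ⟶ w (i + 1) := (har i).some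
  obtain ⟨f, hf⟩ := hirr.exists_forall_arrow_ne_zero (src := id) (tgt := (· + 1)) ar
    fun i => by simp
  obtain ⟨i, hi⟩ := hbd.exists_apply_arrow_eq_zero hw ar f
  exact hf i hi
end
end

section
/- If a finite-dimensional algebra Λ (given as the path algebra of a bound quiver) is hom-irreducible, then Λ is ext-irreducible. -/
/-!
Formalization of a statement from:
"Algebras with irreducible module varieties: two-vertex case completed"
-/

universe u v

open Quiver

noncomputable section

section HME

variable (k : Type u) [Field k] (V : Type) [Quiver.{0} V]

/-- The ambient space of the variety `H(e,d)` of homomorphisms: a representation with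
dimension vector `e`, a representation with dimension vector `d`, and a matrix `f x` of
size `d x × e x` for every vertex `x`. -/
def HomSpace (e d : V → ℕ) : Type u :=
  RepM k V e × RepM k V d × ((x : V) → Matrix (Fin (d x)) (Fin (e x)) k)

/-- The index type for the affine coordinates on `HomSpace`. -/
def HomIdx (e d : V → ℕ) : Type :=
  RepIdx V e ⊕ RepIdx V d ⊕ ((x : V) × (Fin (d x) × Fin (e x)))

variable {k V} in
/-- The affine coordinates on `HomSpace`. -/
def homCoords {e d : V → ℕ} (z : HomSpace k V e d) : HomIdx V e d → k
  | Sum.inl i => repCoords z.1 i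
  | Sum.inr (Sum.inl i) => repCoords z.2.1 i
  | Sum.inr (Sum.inr x) => z.2.2 x.1 x.2.1 x.2.2

/-- The Zariski topology on `HomSpace`. -/
def homTop (e d : V → ℕ) : TopologicalSpace (HomSpace k V e d) :=
  (zariskiTop k _).induced homCoords

/-- The variety `H(e,d)` of the bound quiver `(V, R)`: the triples `(U, W, f)` where `U`,
`W` are representations of the bound quiver with dimension vectors `e` and `d`, and
`f : U → W` is a homomorphism of representations. -/
def homSet (R : Set (Rels k V)) (e d : V → ℕ) : Set (HomSpace k V e d) :=
  {z | z.1 ∈ repSet k V R e ∧ z.2.1 ∈ repSet k V R d ∧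
    ∀ (a b : V) (α : a ⟶ b), z.2.1 a b α * z.2.2 a = z.2.2 b * z.1 a b α}

/-- The variety `M(e,d)` of the bound quiver `(V, R)`: the triples `(U, W, f)` in
`H(e,d)` such that moreover every `f x` is injective (as a linear map). -/
def monoSet (R : Set (Rels k V)) (e d : V → ℕ) : Set (HomSpace k V e d) :=
  {z | z ∈ homSet k V R e d ∧ ∀ x : V, Function.Injective (z.2.2 x).mulVecLin}

/-- The algebra presented by the bound quiver `(V, R)` is hom-irreducible if all the
varieties `H(e,d)` are irreducible. -/
def HomIrreducible (R : Set (Rels k V)) : Prop :=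
  ∀ e d : V → ℕ, @IsIrreducible _ (homTop k V e d) (homSet k V R e d)

/-- The algebra presented by the bound quiver `(V, R)` is mono-irreducible if all the
varieties `M(e,d)` with `e ≤ d` are irreducible. -/
def MonoIrreducible (R : Set (Rels k V)) : Prop :=
  ∀ e d : V → ℕ, (∀ x, e x ≤ d x) →
    @IsIrreducible _ (homTop k V e d) (monoSet k V R e d)

/-- The space of cocycle data `Z`: a matrix `Z α` of size `d b × e a` for every arrow
`α : a ⟶ b`. -/
def ZSpace (e d : V → ℕ) : Type u :=
  ∀ a b : V, (a ⟶ b) → Matrix (Fin (d b)) (Fin (e a)) k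

variable {k V} in
/-- For representations `Mv` (dimension vector `d`) and `Mu` (dimension vector `e`) and
cocycle data `Z`, the value of the cocycle `Z^{U,V}` on a path: for a path `α₁ ⋯ α_l` it
is `∑_j V_{α₁} ⋯ V_{α_{j-1}} · Z_{α_j} · U_{α_{j+1}} ⋯ U_{α_l}`. -/
def zEvalPath {e d : V → ℕ} (Mv : RepM k V d) (Mu : RepM k V e) (Z : ZSpace k V e d) :
    ∀ {a b : V}, Path a b → Matrix (Fin (d b)) (Fin (e a)) k
  | _, _, Path.nil => 0
  | _, _, Path.cons p α => Mv _ _ α * zEvalPath Mv Mu Z p + Z _ _ α * evalPath Mu p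

variable {k V} in
/-- The value of the cocycle `Z^{U,V}` on a relation. -/
def zRelEval {e d : V → ℕ} (Mv : RepM k V d) (Mu : RepM k V e) (Z : ZSpace k V e d)
    {a b : V} (r : RelData k V a b) : Matrix (Fin (d b)) (Fin (e a)) k :=
  r.coeff.sum fun p c => c • zEvalPath Mv Mu Z p

/-- The ambient space of the variety `E(e,d)`: triples `(U, V, Z)`. -/
def ExtSpace (e d : V → ℕ) : Type u :=
  RepM k V e × RepM k V d × ZSpace k V e d

/-- The index type for the affine coordinates on `ExtSpace`. -/
def ExtIdx (e d : V → ℕ) : Type :=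
  RepIdx V e ⊕ RepIdx V d ⊕ ((a : V) × (b : V) × ((a ⟶ b) × (Fin (d b) × Fin (e a))))

variable {k V} in
/-- The affine coordinates on `ExtSpace`. -/
def extCoords {e d : V → ℕ} (z : ExtSpace k V e d) : ExtIdx V e d → k
  | Sum.inl i => repCoords z.1 i
  | Sum.inr (Sum.inl i) => repCoords z.2.1 i
  | Sum.inr (Sum.inr x) => z.2.2 x.1 x.2.1 x.2.2.1 x.2.2.2.1 x.2.2.2.2

/-- The Zariski topology on `ExtSpace`. -/
def extTop (e d : V → ℕ) : TopologicalSpace (ExtSpace k V e d) :=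
  (zariskiTop k _).induced extCoords

/-- The variety `E(e,d)` of the bound quiver `(V, R)`: the triples `(U, V, Z)` where `U`,
`V` are representations of the bound quiver with dimension vectors `e` and `d`, and the
cocycle `Z^{U,V}` vanishes on all the defining relations. -/
def extSet (R : Set (Rels k V)) (e d : V → ℕ) : Set (ExtSpace k V e d) :=
  {z | z.1 ∈ repSet k V R e ∧ z.2.1 ∈ repSet k V R d ∧
    ∀ r ∈ R, zRelEval z.2.1 z.1 z.2.2 r.2.2 = 0}

/-- The algebra presented by the bound quiver `(V, R)` is ext-irreducible if all the
varieties `E(e,d)` are irreducible. -/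
def ExtIrreducible (R : Set (Rels k V)) : Prop :=
  ∀ e d : V → ℕ, @IsIrreducible _ (extTop k V e d) (extSet k V R e d)

end HME

/-!
A triple `(U, V, Z)` of `E(e, d)` is the same as the block upper triangular representation
`[[V, Z], [0, U]]` of dimension vector `d + e` together with its projection `[0 1]` onto `U`.
Conversely, a homomorphism `f = [f₁ f₂] : W → U` in `H(d + e, e)` with every `f₂` invertible
becomes such a projection after the base change `[[1, 0], [f₁, f₂]]`, which maps `ker f` onto the
first `d` coordinates. The resulting map onto `E(e, d)` is rational in the coordinates, with the
determinants of the base changes as denominators, and its domain is a nonempty open subset of the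
irreducible variety `H(d + e, e)`; so `E(e, d)` is irreducible.
-/

lemma Fin.natAdd_ne_castAdd {m n : ℕ} (i : Fin n) (j : Fin m) :
    Fin.natAdd m i ≠ Fin.castAdd n j := by
  rw [Ne, Fin.ext_iff, Fin.val_natAdd, Fin.val_castAdd]
  omega

lemma IsIrreducible.inter_isOpen {X : Type*} [TopologicalSpace X] {s u : Set X}
    (hs : IsIrreducible s) (hu : IsOpen u) (hne : (s ∩ u).Nonempty) : IsIrreducible (s ∩ u) := by
  refine ⟨hne, fun a b ha hb ⟨x, hxsu, hxa⟩ ⟨y, hysu, hyb⟩ => ?_⟩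
  obtain ⟨z, hzs, ⟨hzu, hza⟩, -, hzb⟩ :=
    hs.2 (u ∩ a) (u ∩ b) (hu.inter ha) (hu.inter hb) ⟨x, hxsu.1, hxsu.2, hxa⟩
      ⟨y, hysu.1, hysu.2, hyb⟩
  exact ⟨z, ⟨hzs, hzu⟩, hza, hzb⟩

section MatrixEntries

variable {k : Type u} [Field k] {X : Type*} {A : Subalgebra k (X → k)}

def evalAt (A : Subalgebra k (X → k)) (x : X) : A →+* k :=
  (Pi.evalRingHom (fun _ => k) x).comp A.val.toRingHom

lemma exists_matrix_of_entries_mem {m n : Type*} {M : X → Matrix m n k}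
    (hM : ∀ i j, (fun x => M x i j) ∈ A) :
    ∃ N : Matrix m n A, ∀ x, N.map (evalAt A x) = M x :=
  ⟨Matrix.of fun i j => ⟨_, hM i j⟩, fun _ => rfl⟩

lemma mul_entries_mem {l m n : Type*} [Fintype m] {M : X → Matrix l m k}
    {N : X → Matrix m n k} (hM : ∀ i j, (fun x => M x i j) ∈ A)
    (hN : ∀ i j, (fun x => N x i j) ∈ A) (i : l) (j : n) :
    (fun x => (M x * N x) i j) ∈ A := by
  obtain ⟨M', hM'⟩ := exists_matrix_of_entries_mem hM
  obtain ⟨N', hN'⟩ := exists_matrix_of_entries_mem hN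
  convert ((M' * N') i j).2 using 1
  funext x
  rw [← hM' x, ← hN' x, ← Matrix.map_mul]
  rfl

variable {n : Type*} [Fintype n] [DecidableEq n] {M : X → Matrix n n k}

lemma det_mem_of_entries_mem (hM : ∀ i j, (fun x => M x i j) ∈ A) :
    (fun x => (M x).det) ∈ A := by
  obtain ⟨M', hM'⟩ := exists_matrix_of_entries_mem hM
  convert M'.det.2 using 1
  funext x
  rw [← hM' x, ← RingHom.mapMatrix_apply, ← RingHom.map_det]
  rfl

lemma adjugate_entries_mem (hM : ∀ i j, (fun x => M x i j) ∈ A) (i j : n) :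
    (fun x => (M x).adjugate i j) ∈ A := by
  obtain ⟨M', hM'⟩ := exists_matrix_of_entries_mem hM
  convert (M'.adjugate i j).2 using 1
  funext x
  rw [← hM' x, ← RingHom.mapMatrix_apply, ← RingHom.map_adjugate]
  rfl

end MatrixEntries

section Regular

open MvPolynomial Topology

variable {k : Type u} [Field k] {ι : Type v} {X : Type*}

/-- The functions which on `S` are quotients `P / D` of polynomials in the coordinates `c`, with
`D` vanishing nowhere on `S`. -/
def regularOn (c : X → ι → k) (S : Set X) : Subalgebra k (X → k) where
  carrier := {φ | ∃ P D : MvPolynomial ι k,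
    ∀ x ∈ S, eval (c x) D ≠ 0 ∧ φ x * eval (c x) D = eval (c x) P}
  mul_mem' := by
    rintro φ ψ ⟨P, D, h⟩ ⟨P', D', h'⟩
    refine ⟨P * P', D * D', fun x hx => ?_⟩
    obtain ⟨hD, hφ⟩ := h x hx
    obtain ⟨hD', hψ⟩ := h' x hx
    refine ⟨by simp [hD, hD'], ?_⟩
    simp only [Pi.mul_apply, map_mul, ← hφ, ← hψ]
    ring
  add_mem' := by
    rintro φ ψ ⟨P, D, h⟩ ⟨P', D', h'⟩
    refine ⟨P * D' + P' * D, D * D', fun x hx => ?_⟩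
    obtain ⟨hD, hφ⟩ := h x hx
    obtain ⟨hD', hψ⟩ := h' x hx
    refine ⟨by simp [hD, hD'], ?_⟩
    simp only [Pi.add_apply, map_add, map_mul, ← hφ, ← hψ]
    ring
  algebraMap_mem' a := ⟨C a, 1, fun x _ => by simp⟩

variable {c : X → ι → k} {S : Set X}

lemma coord_mem_regularOn (i : ι) : (fun x => c x i) ∈ regularOn c S :=
  ⟨MvPolynomial.X i, 1, fun x _ => by simp⟩

lemma const_mem_regularOn (a : k) : (fun _ => a) ∈ regularOn c S :=
  ⟨C a, 1, fun x _ => by simp⟩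

lemma inv_mem_regularOn {φ : X → k} (hφ : φ ∈ regularOn c S) (h0 : ∀ x ∈ S, φ x ≠ 0) :
    φ⁻¹ ∈ regularOn c S := by
  obtain ⟨P, D, h⟩ := hφ
  refine ⟨D, P, fun x hx => ?_⟩
  obtain ⟨hD, hφx⟩ := h x hx
  rw [← hφx, Pi.inv_apply]
  exact ⟨mul_ne_zero (h0 x hx) hD, by field_simp [h0 x hx]⟩

lemma eval_mem_regularOn {κ : Type*} {F : X → κ → k}
    (hF : ∀ j, (fun x => F x j) ∈ regularOn c S) (q : MvPolynomial κ k) :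
    (fun x => eval (F x) q) ∈ regularOn c S := by
  induction q using MvPolynomial.induction_on with
  | C a => simp only [eval_C]; exact (regularOn c S).algebraMap_mem a
  | add p q hp hq => simp only [map_add]; exact add_mem hp hq
  | mul_X p j hp => simp only [map_mul, eval_X]; exact mul_mem hp (hF j)

lemma exists_isOpen_inter_eq_of_mem_regularOn {φ : X → k} (hφ : φ ∈ regularOn c S) :
    ∃ u, IsOpen[(zariskiTop k ι).induced c] u ∧ {x | φ x ≠ 0} ∩ S = u ∩ S := by
  obtain ⟨P, D, h⟩ := hφ
  refine ⟨c ⁻¹' {v | eval v P ≠ 0},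
    ⟨_, TopologicalSpace.isOpen_generateFrom_of_mem ⟨P, rfl⟩, rfl⟩, ?_⟩
  ext x
  simp only [Set.mem_inter_iff, Set.mem_ofPred_eq, Set.mem_preimage, and_congr_left_iff]
  intro hx
  rw [← (h x hx).2, mul_ne_zero_iff, and_iff_left (h x hx).1]

lemma isOpen_setOf_ne_zero {φ : X → k} (hφ : φ ∈ regularOn c Set.univ) :
    IsOpen[(zariskiTop k ι).induced c] {x | φ x ≠ 0} := by
  simpa using exists_isOpen_inter_eq_of_mem_regularOn hφ

lemma continuousOn_of_mem_regularOn {κ : Type*} {Y : Type*} {cY : Y → κ → k} {F : X → Y}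
    (hF : ∀ j, (fun x => cY (F x) j) ∈ regularOn c S) :
    @ContinuousOn X Y ((zariskiTop k ι).induced c) ((zariskiTop k κ).induced cY) F S := by
  let _ : TopologicalSpace X := (zariskiTop k ι).induced c
  let _ : TopologicalSpace Y := (zariskiTop k κ).induced cY
  rw [continuousOn_iff_continuous_domRestrict, continuous_induced_rng]
  refine continuous_generateFrom_iff.2 ?_
  rintro _ ⟨q, rfl⟩
  obtain ⟨u, hu, hequ⟩ := exists_isOpen_inter_eq_of_mem_regularOn (eval_mem_regularOn hF q)
  refine isOpen_induced_iff.2 ⟨u, hu, Set.ext fun x => ?_⟩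
  simpa using (Set.ext_iff.1 hequ x).symm

lemma inv_entries_mem_regularOn {n : Type*} [Fintype n] [DecidableEq n] {M : X → Matrix n n k}
    (hM : ∀ i j, (fun x => M x i j) ∈ regularOn c S) (hdet : ∀ x ∈ S, IsUnit (M x).det)
    (i j : n) : (fun x => (M x)⁻¹ i j) ∈ regularOn c S := by
  have h : (fun x => (M x)⁻¹ i j) = (fun x => (M x).det)⁻¹ * fun x => (M x).adjugate i j := by
    funext x
    simp [Matrix.inv_def, Ring.inverse_eq_inv']
  rw [h]
  exact mul_mem (inv_mem_regularOn (det_mem_of_entries_mem hM) fun x hx => (hdet x hx).ne_zero)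
    (adjugate_entries_mem hM i j)

end Regular

section Representations

open Matrix

variable {k : Type u} [Field k] {V : Type} [Quiver.{0} V]

@[simp] lemma evalPath_nil {d : V → ℕ} (M : RepM k V d) (a : V) :
    evalPath M (Path.nil : Path a a) = 1 := by
  simp [evalPath]

@[simp] lemma evalPath_cons {d : V → ℕ} (M : RepM k V d) {a b c : V} (p : Path a b)
    (α : b ⟶ c) : evalPath M (p.cons α) = M b c α * evalPath M p := by
  simp [evalPath]

@[simp] lemma zEvalPath_nil {e d : V → ℕ} (Mv : RepM k V d) (Mu : RepM k V e)
    (Z : ZSpace k V e d) (a : V) : zEvalPath Mv Mu Z (Path.nil : Path a a) = 0 := by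
  simp [zEvalPath]

@[simp] lemma zEvalPath_cons {e d : V → ℕ} (Mv : RepM k V d) (Mu : RepM k V e)
    (Z : ZSpace k V e d) {a b c : V} (p : Path a b) (α : b ⟶ c) :
    zEvalPath Mv Mu Z (p.cons α) = Mv b c α * zEvalPath Mv Mu Z p + Z b c α * evalPath Mu p := by
  simp [zEvalPath]

lemma relEval_eq_zero_of_evalPath {d : V → ℕ} {M : RepM k V d} {a b : V} (r : RelData k V a b)
    (h : ∀ p ∈ r.coeff.support, evalPath M p = 0) : relEval M r = 0 :=
  Finset.sum_eq_zero fun p hp => by simp [h p hp]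

lemma zero_mem_repSet (R : Set (Rels k V)) (d : V → ℕ) :
    (fun _ _ _ => 0 : RepM k V d) ∈ repSet k V R d := by
  rintro ⟨a, b, r⟩ -
  refine relEval_eq_zero_of_evalPath r fun p hp => ?_
  cases p with
  | nil => simpa using r.len _ hp
  | cons p α =>
    exact (evalPath_cons (fun _ _ _ => 0 : RepM k V d) p α).trans (Matrix.zero_mul _)

def conjRep {d : V → ℕ} (M : RepM k V d) (T : ∀ x, Matrix (Fin (d x)) (Fin (d x)) k) :
    RepM k V d :=
  fun a b α => T b * M a b α * (T a)⁻¹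

lemma evalPath_conjRep {d : V → ℕ} (M : RepM k V d) {T : ∀ x, Matrix (Fin (d x)) (Fin (d x)) k}
    (hT : ∀ x, IsUnit (T x).det) {a b : V} (p : Path a b) :
    evalPath (conjRep M T) p = T b * evalPath M p * (T a)⁻¹ := by
  induction p with
  | nil => simp [mul_nonsing_inv _ (hT _)]
  | cons p α ih =>
    rw [evalPath_cons, evalPath_cons, ih, conjRep]
    simp only [Matrix.mul_assoc, nonsing_inv_mul_cancel_left _ _ (hT _)]

lemma conjRep_mem_repSet {R : Set (Rels k V)} {d : V → ℕ} {M : RepM k V d}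
    (hM : M ∈ repSet k V R d) {T : ∀ x, Matrix (Fin (d x)) (Fin (d x)) k}
    (hT : ∀ x, IsUnit (T x).det) :
    conjRep M T ∈ repSet k V R d := by
  rintro ⟨a, b, r⟩ hr
  have h : relEval (conjRep M T) r = T b * relEval M r * (T a)⁻¹ := by
    simp only [relEval, Finsupp.sum, evalPath_conjRep M hT, Matrix.mul_sum, Matrix.sum_mul,
      Matrix.mul_smul, Matrix.smul_mul]
  rw [h, hM _ hr]
  simp

variable {e d : V → ℕ}

/-- The representation on `k^d ⊕ k^e` which is an extension of `Mu` by `Mv` with cocycle `Z`. -/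
def extRep (Mv : RepM k V d) (Mu : RepM k V e) (Z : ZSpace k V e d) :
    RepM k V (fun x => d x + e x) :=
  fun a b α =>
    reindex finSumFinEquiv finSumFinEquiv (fromBlocks (Mv a b α) (Z a b α) 0 (Mu a b α))

lemma evalPath_extRep (Mv : RepM k V d) (Mu : RepM k V e) (Z : ZSpace k V e d) {a b : V}
    (p : Path a b) :
    evalPath (extRep Mv Mu Z) p = reindex finSumFinEquiv finSumFinEquiv
      (fromBlocks (evalPath Mv p) (zEvalPath Mv Mu Z p) 0 (evalPath Mu p)) := by
  induction p with
  | nil => simp [fromBlocks_one]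
  | cons p α ih =>
    rw [evalPath_cons, ih, extRep, reindex_apply, reindex_apply, submatrix_mul_equiv,
      fromBlocks_multiply]
    simp

lemma relEval_extRep (Mv : RepM k V d) (Mu : RepM k V e) (Z : ZSpace k V e d) {a b : V}
    (r : RelData k V a b) :
    relEval (extRep Mv Mu Z) r = reindex finSumFinEquiv finSumFinEquiv
      (fromBlocks (relEval Mv r) (zRelEval Mv Mu Z r) 0 (relEval Mu r)) := by
  ext i j
  induction i using Fin.addCases <;> induction j using Fin.addCases <;>
    simp [relEval, zRelEval, Finsupp.sum, evalPath_extRep, Matrix.sum_apply]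

lemma extRep_mem_repSet_iff (R : Set (Rels k V)) (Mv : RepM k V d) (Mu : RepM k V e)
    (Z : ZSpace k V e d) :
    extRep Mv Mu Z ∈ repSet k V R _ ↔ (Mu, Mv, Z) ∈ extSet k V R e d := by
  have hzero {m n p q : ℕ} (A : Matrix (Fin m) (Fin p) k) (B : Matrix (Fin m) (Fin q) k)
      (D : Matrix (Fin n) (Fin q) k) :
      reindex finSumFinEquiv finSumFinEquiv (fromBlocks A B 0 D) = 0 ↔
        A = 0 ∧ B = 0 ∧ D = 0 := by
    rw [show (0 : Matrix (Fin (m + n)) (Fin (p + q)) k)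
      = reindex finSumFinEquiv finSumFinEquiv (fromBlocks 0 0 0 0) by simp [fromBlocks_zero],
      Equiv.apply_eq_iff_eq, fromBlocks_inj]
    simp
  simp only [repSet, extSet, Set.mem_ofPred_eq, relEval_extRep, hzero, forall_and]
  exact ⟨fun ⟨hv, hz, hu⟩ => ⟨hu, hv, hz⟩, fun ⟨hu, hv, hz⟩ => ⟨hv, hz, hu⟩⟩

variable (e d) in
lemma zero_mem_extSet (R : Set (Rels k V)) :
    ((fun _ _ _ => 0, fun _ _ _ => 0, fun _ _ _ => 0) : ExtSpace k V e d) ∈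
      extSet k V R e d := by
  refine (extRep_mem_repSet_iff R _ _ _).1 ?_
  have h : extRep (fun _ _ _ => 0) (fun _ _ _ => 0) (fun _ _ _ => 0)
      = (fun _ _ _ => 0 : RepM k V (fun x => d x + e x)) := by
    funext a b α
    simp [extRep, Matrix.fromBlocks_zero]
  rw [h]
  exact zero_mem_repSet R _

end Representations

section KernelExtension

open Matrix

variable {k : Type u} [Field k] {V : Type} {e d : V → ℕ}

/-- When invertible, its inverse maps the first `d x` basis vectors onto a basis of
`ker (f x)`. -/
def adaptedBasis (f : ∀ x, Matrix (Fin (e x)) (Fin (d x + e x)) k) (x : V) :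
    Matrix (Fin (d x + e x)) (Fin (d x + e x)) k :=
  Matrix.of (Fin.append
    ((1 : Matrix (Fin (d x + e x)) (Fin (d x + e x)) k).submatrix (Fin.castAdd (e x)) id)
    (f x))

lemma adaptedBasis_castAdd (f : ∀ x, Matrix (Fin (e x)) (Fin (d x + e x)) k) (x : V)
    (i : Fin (d x)) :
    adaptedBasis f x (Fin.castAdd (e x) i)
      = (1 : Matrix (Fin (d x + e x)) (Fin (d x + e x)) k) (Fin.castAdd (e x) i) :=
  Fin.append_left _ _ i

lemma adaptedBasis_natAdd (f : ∀ x, Matrix (Fin (e x)) (Fin (d x + e x)) k) (x : V)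
    (i : Fin (e x)) : adaptedBasis f x (Fin.natAdd (d x) i) = f x i :=
  Fin.append_right _ _ i

lemma submatrix_adaptedBasis_natAdd (f : ∀ x, Matrix (Fin (e x)) (Fin (d x + e x)) k)
    (x : V) : (adaptedBasis f x).submatrix (Fin.natAdd (d x)) id = f x := by
  ext i j
  rw [submatrix_apply, adaptedBasis_natAdd]
  rfl

variable [Quiver.{0} V]

lemma submatrix_conjRep_adaptedBasis_natAdd {W : RepM k V (fun x => d x + e x)}
    {U : RepM k V e} {f : ∀ x, Matrix (Fin (e x)) (Fin (d x + e x)) k}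
    (hf : ∀ (a b : V) (α : a ⟶ b), U a b α * f a = f b * W a b α)
    (hdet : ∀ x, IsUnit (adaptedBasis f x).det) {a b : V} (α : a ⟶ b) :
    (conjRep W (adaptedBasis f) a b α).submatrix (Fin.natAdd (d b)) id
      = U a b α * (1 : Matrix (Fin (d a + e a)) (Fin (d a + e a)) k).submatrix
          (Fin.natAdd (d a)) id := by
  have hrows {l o : Type} [Fintype l] {m n : ℕ} (M : Matrix (Fin (m + n)) l k)
      (N : Matrix l o k) :
      (M * N).submatrix (Fin.natAdd m) id = M.submatrix (Fin.natAdd m) id * N := by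
    rw [submatrix_mul _ _ _ id _ Function.bijective_id, submatrix_id_id]
  calc (conjRep W (adaptedBasis f) a b α).submatrix (Fin.natAdd (d b)) id
      = f b * W a b α * (adaptedBasis f a)⁻¹ := by
        rw [conjRep, hrows, hrows, submatrix_adaptedBasis_natAdd]
    _ = U a b α * ((adaptedBasis f a).submatrix (Fin.natAdd (d a)) id
          * (adaptedBasis f a)⁻¹) := by
        rw [← hf, submatrix_adaptedBasis_natAdd, Matrix.mul_assoc]
    _ = _ := by rw [← hrows, mul_nonsing_inv _ (hdet a)]

variable (e d) in
def adaptedHomSet (R : Set (Rels k V)) : Set (HomSpace k V (fun x => d x + e x) e) :=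
  homSet k V R _ e ∩ {z | ∀ x, IsUnit (adaptedBasis z.2.2 x).det}

variable (e d) in
/-- `(W, U, f) ↦ (U, V, Z)`, where in the adapted basis `W` is the extension of `U` by `ker f`
with cocycle `Z`. -/
def kernelExt (z : HomSpace k V (fun x => d x + e x) e) : ExtSpace k V e d :=
  (z.2.1,
   fun a b α => (conjRep z.1 (adaptedBasis z.2.2) a b α).submatrix (Fin.castAdd (e b))
     (Fin.castAdd (e a)),
   fun a b α => (conjRep z.1 (adaptedBasis z.2.2) a b α).submatrix (Fin.castAdd (e b))
     (Fin.natAdd (d a)))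

lemma conjRep_adaptedBasis_eq_extRep {R : Set (Rels k V)}
    {z : HomSpace k V (fun x => d x + e x) e} (hz : z ∈ adaptedHomSet e d R) :
    conjRep z.1 (adaptedBasis z.2.2)
      = extRep (kernelExt e d z).2.1 z.2.1 (kernelExt e d z).2.2 := by
  funext a b α
  have hrows := submatrix_conjRep_adaptedBasis_natAdd hz.1.2.2 hz.2 α
  ext i j
  induction i using Fin.addCases with
  | left i => induction j using Fin.addCases <;> simp [extRep, kernelExt]
  | right i =>
    have h := congrFun (congrFun hrows i) j
    induction j using Fin.addCases <;>
      simpa [extRep, mul_apply, one_apply, Fin.natAdd_ne_castAdd] using h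

lemma kernelExt_mem_extSet {R : Set (Rels k V)} {z : HomSpace k V (fun x => d x + e x) e}
    (hz : z ∈ adaptedHomSet e d R) : kernelExt e d z ∈ extSet k V R e d := by
  have h := conjRep_mem_repSet hz.1.1 hz.2
  rw [conjRep_adaptedBasis_eq_extRep hz] at h
  exact (extRep_mem_repSet_iff R _ _ _).1 h

variable (e d) in
/-- The extension `W` of `U` by `V` with cocycle `Z`, with its projection onto `U`. -/
def extHom (w : ExtSpace k V e d) : HomSpace k V (fun x => d x + e x) e :=
  (extRep w.2.1 w.1 w.2.2, w.1,
   fun x => (1 : Matrix (Fin (d x + e x)) (Fin (d x + e x)) k).submatrix (Fin.natAdd (d x)) id)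

lemma adaptedBasis_extHom (w : ExtSpace k V e d) (x : V) :
    adaptedBasis (extHom e d w).2.2 x = 1 := by
  ext i j
  induction i using Fin.addCases with
  | left i => simp [adaptedBasis_castAdd]
  | right i =>
    rw [adaptedBasis_natAdd]
    rfl

lemma extHom_mem_adaptedHomSet {R : Set (Rels k V)} {w : ExtSpace k V e d}
    (hw : w ∈ extSet k V R e d) : extHom e d w ∈ adaptedHomSet e d R := by
  refine ⟨⟨(extRep_mem_repSet_iff R _ _ _).2 hw, hw.1, fun a b α => ?_⟩,
    fun x => by simp [adaptedBasis_extHom]⟩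
  ext i j
  induction j using Fin.addCases <;>
    simp [extHom, extRep, mul_apply, one_apply, Fin.natAdd_ne_castAdd]

lemma kernelExt_extHom (w : ExtSpace k V e d) : kernelExt e d (extHom e d w) = w := by
  have h : conjRep (extHom e d w).1 (adaptedBasis (extHom e d w).2.2)
      = extRep w.2.1 w.1 w.2.2 := by
    funext a b α
    simp only [conjRep, adaptedBasis_extHom, inv_one, Matrix.one_mul, Matrix.mul_one]
    rfl
  refine Prod.ext rfl (Prod.ext ?_ ?_) <;> funext a b α <;> ext i j <;> simp [kernelExt, h, extRep]

lemma image_kernelExt (R : Set (Rels k V)) :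
    kernelExt e d '' adaptedHomSet e d R = extSet k V R e d :=
  Set.Subset.antisymm (Set.image_subset_iff.2 fun _ hz => kernelExt_mem_extSet hz)
    fun w hw => ⟨extHom e d w, extHom_mem_adaptedHomSet hw, kernelExt_extHom w⟩

end KernelExtension

section Zariski

open Topology

variable {k : Type u} [Field k] {V : Type} [Quiver.{0} V] {e d : V → ℕ}
  {S : Set (HomSpace k V (fun x => d x + e x) e)}

lemma rep_entries_mem_regularOn {a b : V} (α : a ⟶ b) (i : Fin (d b + e b))
    (j : Fin (d a + e a)) :
    (fun z : HomSpace k V (fun x => d x + e x) e => z.1 a b α i j) ∈ regularOn homCoords S :=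
  coord_mem_regularOn (Sum.inl ⟨a, b, α, i, j⟩ : HomIdx V (fun x => d x + e x) e)

lemma adaptedBasis_entries_mem_regularOn (x : V) (i j : Fin (d x + e x)) :
    (fun z : HomSpace k V (fun x => d x + e x) e => adaptedBasis z.2.2 x i j)
      ∈ regularOn homCoords S := by
  induction i using Fin.addCases with
  | left i =>
    simp only [adaptedBasis_castAdd]
    exact const_mem_regularOn _
  | right i =>
    simp only [adaptedBasis_natAdd]
    exact coord_mem_regularOn (Sum.inr (Sum.inr ⟨x, i, j⟩) : HomIdx V (fun x => d x + e x) e)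

lemma isOpen_setOf_isUnit_det_adaptedBasis [Finite V] :
    IsOpen[homTop k V (fun x => d x + e x) e]
      {z | ∀ x, IsUnit (adaptedBasis z.2.2 x).det} := by
  let _ := homTop k V (fun x => d x + e x) e
  simp only [isUnit_iff_ne_zero, Set.ofPred_forall]
  exact isOpen_iInter_of_finite fun x =>
    isOpen_setOf_ne_zero (det_mem_of_entries_mem (adaptedBasis_entries_mem_regularOn x))

lemma continuousOn_kernelExt (R : Set (Rels k V)) :
    @ContinuousOn _ _ (homTop k V (fun x => d x + e x) e) (extTop k V e d) (kernelExt e d)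
      (adaptedHomSet e d R) := by
  have hconj {a b : V} (α : a ⟶ b) (i j) :
      (fun z : HomSpace k V (fun x => d x + e x) e =>
        conjRep z.1 (adaptedBasis z.2.2) a b α i j) ∈ regularOn homCoords (adaptedHomSet e d R) :=
    mul_entries_mem (mul_entries_mem (adaptedBasis_entries_mem_regularOn b)
      (rep_entries_mem_regularOn α))
      (inv_entries_mem_regularOn (adaptedBasis_entries_mem_regularOn a) fun _ hz => hz.2 a) i j
  refine continuousOn_of_mem_regularOn fun j => ?_
  rcases j with i | i | ⟨a, b, α, i, j⟩
  · exact coord_mem_regularOn (Sum.inr (Sum.inl i))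
  · exact hconj _ _ _
  · exact hconj _ _ _

end Zariski

/-- If a finite-dimensional algebra `Λ`, given as the path algebra of a
bound quiver, is hom-irreducible, then `Λ` is ext-irreducible. -/
theorem homIrreducible_extIrreducible (k : Type u) [Field k] [IsAlgClosed k]
    (V : Type) [Quiver.{0} V] [Finite V] [∀ a b : V, Finite (a ⟶ b)]
    (R : Set (Rels k V)) (hbd : IsBoundQuiver k V R)
    (hhom : HomIrreducible k V R) :
    ExtIrreducible k V R := by
  intro e d
  let _ := homTop k V (fun x => d x + e x) e
  let _ := extTop k V e d
  have hirr : IsIrreducible (adaptedHomSet e d R) :=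
    (hhom _ e).inter_isOpen isOpen_setOf_isUnit_det_adaptedBasis
      ⟨_, extHom_mem_adaptedHomSet (zero_mem_extSet e d R)⟩
  rw [← image_kernelExt R]
  exact hirr.image _ (continuousOn_kernelExt R)
end
end
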